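/- For every integer n and positive integer Q, Σ_{θ∈F_Q} e(nθ) = Σ_{d|n, d≥1} d·M(Q/d), where for n = 0 the right side is interpreted as Σ_{d≥1} M(Q/d) = |F_Q|. -/

import Mathlib

/-!
Grouping `F_Q` by denominator turns the sum into `∑_{q ≤ Q} c_q(n)`, where `c_q(n)` is the
Ramanujan sum. Detecting `gcd(a, q) = 1` with `∑_{d ∣ gcd(a, q)} μ(d)` gives `c_q = μ ∗ g`
with `g(m) = ∑_{b ≤ m} e(nb/m) = m·[m ∣ n]`, and summing the convolution `g ∗ μ` up to `Q`
gives `∑_{m ≤ Q} g(m) M(Q/m)`.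
-/

open Finset Complex

def farey (Q : ℕ) : Finset ℚ :=
  (Finset.Icc 1 Q).biUnion fun q =>
    ((Finset.Icc 1 q).filter fun a => Nat.gcd a q = 1).image fun a : ℕ => (a : ℚ) / (q : ℚ)

noncomputable def e (x : ℝ) : ℂ := Complex.exp (2 * Real.pi * Complex.I * x)

/-- The Mertens summatory function `M(x) = ∑_{m ≤ x} μ(m)`. -/
def mertens (x : ℕ) : ℤ := ∑ m ∈ Finset.Icc 1 x, ArithmeticFunction.moebius m

open ArithmeticFunction
open scoped ArithmeticFunction.Moebius

lemma e_mul_natCast (x : ℝ) (b : ℕ) : e (x * b) = e x ^ b := by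
  rw [e, e, ← Complex.exp_nat_mul]; push_cast; ring_nf

lemma e_eq_one_iff (x : ℝ) : e x = 1 ↔ ∃ k : ℤ, x = k := by
  have h2πi : (2 * Real.pi * I : ℂ) ≠ 0 := by simp [Real.pi_ne_zero]
  rw [e, Complex.exp_eq_one_iff]
  refine exists_congr fun k => ⟨fun hk => ?_, fun hk => by rw [hk]; push_cast; ring⟩
  exact_mod_cast mul_left_cancel₀ h2πi (hk.trans (mul_comm _ _))

lemma sum_Icc_e_mul_div (m : ℕ) (n : ℤ) :
    ∑ b ∈ Icc 1 m, e (n * (b / m)) = if (m : ℤ) ∣ n then (m : ℂ) else 0 := by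
  rcases Nat.eq_zero_or_pos m with rfl | hm
  · simp
  have hm0 : (m : ℝ) ≠ 0 := by positivity
  set ζ := e (n / m)
  have hterm (b : ℕ) : e (n * (b / m)) = ζ ^ b := by rw [← e_mul_natCast]; ring_nf
  have hζm : ζ ^ m = 1 := by rw [← hterm, e_eq_one_iff]; exact ⟨n, by field_simp⟩
  have hζ_eq_one : ζ = 1 ↔ (m : ℤ) ∣ n := by
    rw [e_eq_one_iff]
    refine ⟨fun ⟨k, hk⟩ => ⟨k, ?_⟩,
      fun ⟨k, hk⟩ => ⟨k, by rw [hk]; push_cast; field_simp⟩⟩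
    rw [div_eq_iff hm0] at hk
    exact_mod_cast hk.trans (mul_comm _ _)
  simp only [hterm]
  split_ifs with h
  · simp [hζ_eq_one.mpr h]
  · have hshift : ∑ b ∈ Icc 1 m, ζ ^ b = ζ * ∑ b ∈ range m, ζ ^ b := by
      rw [mul_sum, ← Ico_add_one_right_eq_Icc, sum_Ico_eq_sum_range]
      simp [pow_succ, pow_add, mul_comm]
    rw [hshift, geom_sum_eq (mt hζ_eq_one.mp h), hζm]
    simp

lemma sum_divisors_moebius {R : Type*} [Ring R] (k : ℕ) :
    ∑ d ∈ k.divisors, (μ d : R) = if k = 1 then 1 else 0 := by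
  have := congrArg (fun f : ArithmeticFunction ℤ => (f k : R)) moebius_mul_coe_zeta
  simpa only [coe_mul_zeta_apply, one_apply, Int.cast_sum, apply_ite, Int.cast_one,
    Int.cast_zero] using this

lemma sum_Icc_filter_dvd {M : Type*} [AddCommMonoid M] (f : ℕ → M) {d : ℕ} (hd : 0 < d)
    (N : ℕ) : ∑ a ∈ Icc 1 N with d ∣ a, f a = ∑ b ∈ Icc 1 (N / d), f (d * b) := by
  have himage : {a ∈ Icc 1 N | d ∣ a} = (Icc 1 (N / d)).image (d * ·) := by
    ext a
    simp only [mem_filter, mem_Icc, mem_image, Nat.le_div_iff_mul_le hd]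
    constructor
    · rintro ⟨⟨h1, h2⟩, b, rfl⟩
      exact ⟨b, ⟨Nat.pos_of_mul_pos_left h1, by linarith⟩, rfl⟩
    · rintro ⟨b, ⟨h1, h2⟩, rfl⟩
      exact ⟨⟨by nlinarith, by linarith⟩, dvd_mul_right d b⟩
  rw [himage, sum_image fun _ _ _ _ h => Nat.eq_of_mul_eq_mul_left hd h]

lemma natCast_div_inj_of_coprime {a b q r : ℕ} (hq : 0 < q) (hr : 0 < r) (ha : a.gcd q = 1)
    (hb : b.gcd r = 1) (h : (a / q : ℚ) = b / r) : a = b ∧ q = r := by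
  have := Rat.div_int_inj (a := a) (b := q) (c := b) (d := r) (by exact_mod_cast hq)
    (by exact_mod_cast hr) (by simpa using ha) (by simpa using hb)
    (by simpa only [Int.cast_natCast] using h)
  omega

lemma sum_farey {M : Type*} [AddCommMonoid M] (Q : ℕ) (f : ℚ → M) :
    ∑ θ ∈ farey Q, f θ =
      ∑ q ∈ Icc 1 Q, ∑ a ∈ Icc 1 q with a.gcd q = 1, f (a / q) := by
  rw [farey, sum_biUnion]
  · refine sum_congr rfl fun q hq => sum_image fun a ha b hb hab => ?_
    simp only [coe_filter, Set.mem_ofPred_eq, mem_Icc] at ha hb hq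
    exact (natCast_div_inj_of_coprime (by omega) (by omega) ha.2 hb.2 hab).1
  · intro q hq r hr hqr
    simp only [coe_Icc, Set.mem_Icc] at hq hr
    simp only [Function.onFun, disjoint_left, mem_image, mem_filter, mem_Icc]
    rintro _ ⟨a, ⟨-, ha⟩, rfl⟩ ⟨b, ⟨-, hb⟩, hab⟩
    exact hqr (natCast_div_inj_of_coprime (by omega) (by omega) hb ha hab).2.symm

noncomputable def idOnDivisors (n : ℤ) : ArithmeticFunction ℂ :=
  ⟨fun m => if (m : ℤ) ∣ n then m else 0, by simp⟩

lemma idOnDivisors_apply (n : ℤ) (m : ℕ) :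
    idOnDivisors n m = if (m : ℤ) ∣ n then (m : ℂ) else 0 :=
  rfl

noncomputable def ramanujanSum (n : ℤ) (q : ℕ) : ℂ :=
  ∑ a ∈ Icc 1 q with a.gcd q = 1, e (n * (a / q))

theorem ramanujanSum_eq_moebius_mul (n : ℤ) (q : ℕ) :
    ramanujanSum n q = ((μ : ArithmeticFunction ℂ) * idOnDivisors n) q := by
  rcases Nat.eq_zero_or_pos q with rfl | hq
  · simp [ramanujanSum]
  have coprime_indicator (a : ℕ) :
      (if a.gcd q = 1 then (1 : ℂ) else 0) = ∑ d ∈ q.divisors with d ∣ a, (μ d : ℂ) := by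
    have hdiv : {d ∈ q.divisors | d ∣ a} = (a.gcd q).divisors := by
      ext d
      simp only [mem_filter, Nat.mem_divisors, Nat.dvd_gcd_iff]
      exact ⟨fun ⟨⟨hdq, hq0⟩, hda⟩ => ⟨⟨hda, hdq⟩, Nat.gcd_ne_zero_right hq0⟩,
        fun ⟨⟨hda, hdq⟩, _⟩ => ⟨⟨hdq, hq.ne'⟩, hda⟩⟩
    rw [hdiv, sum_divisors_moebius]
  calc ramanujanSum n q
      = ∑ a ∈ Icc 1 q, ∑ d ∈ q.divisors with d ∣ a, (μ d : ℂ) * e (n * (a / q)) := by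
        rw [ramanujanSum, sum_filter]
        refine sum_congr rfl fun a _ => ?_
        rw [← sum_mul, ← coprime_indicator a, ite_mul, one_mul, zero_mul]
    _ = ∑ d ∈ q.divisors, (μ d : ℂ) * ∑ a ∈ Icc 1 q with d ∣ a, e (n * (a / q)) := by
        simp_rw [sum_filter, mul_sum, mul_ite, mul_zero]
        exact sum_comm
    _ = ∑ d ∈ q.divisors, (μ d : ℂ) * idOnDivisors n (q / d) := by
        refine sum_congr rfl fun d hd => ?_
        have hdq := Nat.dvd_of_mem_divisors hd
        have hd0 : (d : ℝ) ≠ 0 := by exact_mod_cast (Nat.pos_of_mem_divisors hd).ne'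
        rw [sum_Icc_filter_dvd _ (Nat.pos_of_mem_divisors hd), idOnDivisors_apply,
          ← sum_Icc_e_mul_div]
        congr 1
        refine sum_congr rfl fun b _ => ?_
        rw [Nat.cast_div hdq hd0]
        push_cast
        field_simp
    _ = ((μ : ArithmeticFunction ℂ) * idOnDivisors n) q := by
        rw [mul_apply,
          Nat.sum_divisorsAntidiagonal fun d m => (μ : ArithmeticFunction ℂ) d * idOnDivisors n m]
        simp only [intCoe_apply]

lemma mertens_eq_sum_Ioc (x : ℕ) : (mertens x : ℂ) = ∑ d ∈ Ioc 0 x, (μ d : ℂ) := by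
  rw [mertens, ← Icc_add_one_left_eq_Ioc]
  push_cast
  rfl

theorem sum_farey_exp_general (Q : ℕ) (n : ℤ) :
    ∑ θ ∈ farey Q, e ((n : ℝ) * (θ : ℝ)) =
      ∑ d ∈ Finset.Icc 1 Q, if (d : ℤ) ∣ n then (d : ℂ) * (mertens (Q / d) : ℂ) else 0 := by
  calc ∑ θ ∈ farey Q, e ((n : ℝ) * (θ : ℝ))
      = ∑ q ∈ Ioc 0 Q, (idOnDivisors n * (μ : ArithmeticFunction ℂ)) q := by
        rw [sum_farey, ← Icc_add_one_left_eq_Ioc]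
        refine sum_congr rfl fun q _ => ?_
        rw [mul_comm, ← ramanujanSum_eq_moebius_mul, ramanujanSum]
        push_cast
        rfl
    _ = ∑ d ∈ Ioc 0 Q, idOnDivisors n d * ∑ m ∈ Ioc 0 (Q / d), (μ m : ℂ) :=
        sum_Ioc_mul_eq_sum_sum _ _ Q
    _ = _ := by
        rw [← Icc_add_one_left_eq_Ioc]
        refine sum_congr rfl fun d _ => ?_
        rw [idOnDivisors_apply, mertens_eq_sum_Ioc, ite_mul, zero_mul]

theorem sum_farey_exp (Q : ℕ) (hQ : 0 < Q) (n : ℤ) :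
    ∑ θ ∈ farey Q, e ((n : ℝ) * (θ : ℝ)) =
      ∑ d ∈ Finset.Icc 1 Q, if (d : ℤ) ∣ n then (d : ℂ) * (mertens (Q / d) : ℂ) else 0 :=
  sum_farey_exp_general Q n
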